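/- arXiv:1704.08703 — 2 statements merged into one kernel-verified Lean document; each statement's English description precedes it below -/
import Mathlib

section
/- For L ≥ 2 and real numbers J ≠ 0, h, consider on H_L = ⨂_{j=1}^{L} ℂ² the transverse-field Ising Hamiltonian H = −J Σ_{j=1}^{L−1} σᶻ_j σᶻ_{j+1} − h Σ_{j=1}^{L} σˣ_j and the operator Φ = Σ_{j=1}^{L} (h/J)^{j−1} γ_j^A, where γ_j^A = (Π_{k=1}^{j−1} σˣ_k) σᶻ_j and γ_j^B = (Π_{k=1}^{j−1} σˣ_k) σʸ_j. Then (i) [H, Φ] = 2 i h (h/J)^{L−1} γ_L^B, and (ii) Φ² = (Σ_{j=1}^{L} (h/J)^{2(j−1)}) · Id. In particular Φ commutes with H up to a single term whose operator norm is 2|h|·|h/J|^{L−1}. -/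
/-!
Every operator involved is a tensor product of Pauli matrices, and two such products commute
or anticommute according to the parity of the number of sites where their factors anticommute.
Thus `σᶻ_j σᶻ_{j+1}` fails to commute only with `γ^A_{j+1}` and `σˣ_j` only with `γ^A_j`,
both commutators being `±2i γ^B_j`. With the weights `(h/J)^j` the contributions
`-J (h/J)^{j+1}` and `h (h/J)^j` of the two terms of `H` cancel at every site but the last one,
which has no bond to its right. The `γ^A_j` anticommute pairwise and square to `1`, which
gives `Φ²`.

Sites are numbered from `0`: site `j` of the paper is index `j - 1`.
-/

noncomputable section

open Matrix Complex

/-- Pauli X matrix. -/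
def sigmaX : Matrix (Fin 2) (Fin 2) ℂ := !![0, 1; 1, 0]

/-- Pauli Y matrix. -/
def sigmaY : Matrix (Fin 2) (Fin 2) ℂ := !![0, -Complex.I; Complex.I, 0]

/-- Pauli Z matrix. -/
def sigmaZ : Matrix (Fin 2) (Fin 2) ℂ := !![1, 0; 0, -1]

/-- The operator on ⨂_{k=0}^{L-1} ℂ² acting as the 2×2 matrix `A` on the j-th tensor
factor and as the identity on all the others (matrix entries of a tensor product). -/
def siteOp (L : ℕ) (j : ℕ) (A : Matrix (Fin 2) (Fin 2) ℂ) :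
    Matrix (Fin L → Fin 2) (Fin L → Fin 2) ℂ :=
  fun s t => ∏ k : Fin L, if (k : ℕ) = j then A (s k) (t k) else (if s k = t k then 1 else 0)

/-- σˣ_j -/
def PX (L j : ℕ) : Matrix (Fin L → Fin 2) (Fin L → Fin 2) ℂ := siteOp L j sigmaX
/-- σʸ_j -/
def PY (L j : ℕ) : Matrix (Fin L → Fin 2) (Fin L → Fin 2) ℂ := siteOp L j sigmaY
/-- σᶻ_j -/
def PZ (L j : ℕ) : Matrix (Fin L → Fin 2) (Fin L → Fin 2) ℂ := siteOp L j sigmaZ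

/-- The Jordan–Wigner string Π_{k<j} σˣ_k. -/
def jwString (L j : ℕ) : Matrix (Fin L → Fin 2) (Fin L → Fin 2) ℂ :=
  ((List.range j).map (PX L)).prod

/-- Majorana operator γ_j^A = (Π_{k<j} σˣ_k) σᶻ_j (0-based site index). -/
def gammaA (L j : ℕ) : Matrix (Fin L → Fin 2) (Fin L → Fin 2) ℂ := jwString L j * PZ L j

/-- Majorana operator γ_j^B = (Π_{k<j} σˣ_k) σʸ_j (0-based site index). -/
def gammaB (L j : ℕ) : Matrix (Fin L → Fin 2) (Fin L → Fin 2) ℂ := jwString L j * PY L j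

section TensorOp

variable {ι d R : Type*} [Fintype ι] [CommRing R]

def tensorOp (f : ι → Matrix d d R) : Matrix (ι → d) (ι → d) R :=
  Matrix.of fun s t => ∏ k, f k (s k) (t k)

theorem tensorOp_mul [DecidableEq ι] [Fintype d] (f g : ι → Matrix d d R) :
    tensorOp f * tensorOp g = tensorOp fun k => f k * g k := by
  ext s t
  simp only [tensorOp, Matrix.mul_apply, Matrix.of_apply]
  rw [Fintype.prod_sum fun k x => f k (s k) x * g k x (t k)]
  exact Finset.sum_congr rfl fun u _ => Finset.prod_mul_distrib.symm

theorem tensorOp_one [DecidableEq d] : tensorOp (fun _ : ι => (1 : Matrix d d R)) = 1 := by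
  ext s t
  simp only [tensorOp, Matrix.of_apply, Matrix.one_apply]
  by_cases hst : s = t
  · simp [hst]
  · obtain ⟨k, hk⟩ := Function.ne_iff.mp hst
    rw [if_neg hst]
    exact Finset.prod_eq_zero (Finset.mem_univ k) (if_neg hk)

theorem tensorOp_smul (c : ι → R) (f : ι → Matrix d d R) :
    tensorOp (fun k => c k • f k) = (∏ k, c k) • tensorOp f := by
  ext s t
  simp [tensorOp, Finset.prod_mul_distrib]

theorem tensorOp_eq_smul_of_forall_ne [DecidableEq ι] {f g : ι → Matrix d d R} (j : ι) (c : R)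
    (hj : f j = c • g j) (hk : ∀ k, k ≠ j → f k = g k) :
    tensorOp f = c • tensorOp g := by
  have hfg : f = fun k => (if k = j then c else 1) • g k := by
    ext1 k
    by_cases h : k = j
    · simp [h, hj]
    · simp [h, hk k h]
  rw [hfg, tensorOp_smul, Fintype.prod_ite_eq']

theorem tensorOp_mul_eq_smul_mul_of_forall_ne [DecidableEq ι] [Fintype d]
    {f g : ι → Matrix d d R} (j : ι) (c : R) (hj : f j * g j = c • (g j * f j))
    (hk : ∀ k, k ≠ j → f k * g k = g k * f k) :
    tensorOp f * tensorOp g = c • (tensorOp g * tensorOp f) := by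
  rw [tensorOp_mul, tensorOp_mul]
  exact tensorOp_eq_smul_of_forall_ne j c hj hk

end TensorOp

theorem sum_smul_mul_self_of_anticommute {ι R A : Type*} [CommRing R] [Ring A] [Algebra R A]
    (s : Finset ι) (c : ι → R) (a : ι → A) (hsq : ∀ i ∈ s, a i * a i = 1)
    (hanti : ∀ i ∈ s, ∀ k ∈ s, i ≠ k → a i * a k = -(a k * a i)) :
    (∑ i ∈ s, c i • a i) * (∑ i ∈ s, c i • a i) = (∑ i ∈ s, c i ^ 2) • 1 := by
  classical
  induction s using Finset.induction_on with
  | empty => simp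
  | insert i s hi ih =>
    set S := ∑ k ∈ s, c k • a k
    have hsq_i : c i • a i * (c i • a i) = c i ^ 2 • 1 := by
      rw [smul_mul_smul_comm, hsq i (Finset.mem_insert_self i s), sq]
    have hcross : c i • a i * S + S * (c i • a i) = 0 := by
      rw [Finset.mul_sum, Finset.sum_mul, ← Finset.sum_add_distrib]
      refine Finset.sum_eq_zero fun k hk => ?_
      rw [smul_mul_smul_comm, smul_mul_smul_comm, mul_comm (c k), ← smul_add,
        hanti i (Finset.mem_insert_self i s) k (Finset.mem_insert_of_mem hk)
          (ne_of_mem_of_not_mem hk hi).symm, neg_add_cancel, smul_zero]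
    calc (∑ k ∈ insert i s, c k • a k) * (∑ k ∈ insert i s, c k • a k)
        = c i • a i * (c i • a i) + (c i • a i * S + S * (c i • a i)) + S * S := by
          rw [Finset.sum_insert hi]
          change (c i • a i + S) * (c i • a i + S) = _
          simp only [add_mul, mul_add]
          abel
      _ = (∑ k ∈ insert i s, c k ^ 2) • 1 := by
          rw [hsq_i, hcross, ih (fun k hk => hsq k (Finset.mem_insert_of_mem hk))
            fun k hk l hl => hanti k (Finset.mem_insert_of_mem hk) l
              (Finset.mem_insert_of_mem hl),
            Finset.sum_insert hi, add_zero, add_smul]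

theorem sigmaX_mul_self : sigmaX * sigmaX = 1 := by
  simp [sigmaX, Matrix.one_fin_two]

theorem sigmaZ_mul_self : sigmaZ * sigmaZ = 1 := by
  simp [sigmaZ, Matrix.one_fin_two]

theorem sigmaZ_mul_sigmaX : sigmaZ * sigmaX = I • sigmaY := by
  simp [sigmaZ, sigmaX, sigmaY, Matrix.smul_of]

theorem sigmaX_mul_sigmaZ : sigmaX * sigmaZ = -I • sigmaY := by
  simp [sigmaZ, sigmaX, sigmaY, Matrix.smul_of]

theorem siteOp_eq_tensorOp (L j : ℕ) (A : Matrix (Fin 2) (Fin 2) ℂ) :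
    siteOp L j A = tensorOp fun k : Fin L => if (k : ℕ) = j then A else 1 := by
  ext s t
  simp only [siteOp, tensorOp, Matrix.of_apply]
  refine Finset.prod_congr rfl fun k _ => ?_
  split_ifs <;> simp [Matrix.one_apply, *]

theorem jwString_eq_tensorOp (L j : ℕ) :
    jwString L j = tensorOp fun k : Fin L => if (k : ℕ) < j then sigmaX else 1 := by
  induction j with
  | zero => simp [jwString, tensorOp_one]
  | succ j ih =>
    rw [jwString, List.range_succ, List.map_append, List.prod_append, List.map_singleton,
      List.prod_singleton, ← jwString, ih, PX, siteOp_eq_tensorOp, tensorOp_mul]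
    congr 1
    ext1 k
    rcases lt_trichotomy (k : ℕ) j with hk | hk | hk
    · simp [hk, hk.ne, Nat.lt_succ_of_lt hk]
    · simp [hk]
    · simp [hk.not_gt, hk.ne', show ¬ (k : ℕ) < j + 1 by omega]

def jwProfile (j : ℕ) (A : Matrix (Fin 2) (Fin 2) ℂ) (k : ℕ) : Matrix (Fin 2) (Fin 2) ℂ :=
  if k < j then sigmaX else if k = j then A else 1

theorem jwString_mul_siteOp (L j : ℕ) (A : Matrix (Fin 2) (Fin 2) ℂ) :
    jwString L j * siteOp L j A = tensorOp fun k : Fin L => jwProfile j A k := by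
  rw [jwString_eq_tensorOp, siteOp_eq_tensorOp, tensorOp_mul]
  congr 1
  ext1 k
  rcases lt_trichotomy (k : ℕ) j with hk | hk | hk
  · simp [jwProfile, hk, hk.ne]
  · simp [jwProfile, hk]
  · simp [jwProfile, hk.not_gt, hk.ne']

theorem gammaA_eq_tensorOp (L j : ℕ) :
    gammaA L j = tensorOp fun k : Fin L => jwProfile j sigmaZ k :=
  jwString_mul_siteOp L j sigmaZ

theorem gammaB_eq_tensorOp (L j : ℕ) :
    gammaB L j = tensorOp fun k : Fin L => jwProfile j sigmaY k :=
  jwString_mul_siteOp L j sigmaY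

theorem siteOp_mul_tensorOp {L j : ℕ} (hj : j < L) {A : Matrix (Fin 2) (Fin 2) ℂ}
    {g : Fin L → Matrix (Fin 2) (Fin 2) ℂ} {c : ℂ}
    (h : A * g ⟨j, hj⟩ = c • (g ⟨j, hj⟩ * A)) :
    siteOp L j A * tensorOp g = c • (tensorOp g * siteOp L j A) := by
  rw [siteOp_eq_tensorOp]
  refine tensorOp_mul_eq_smul_mul_of_forall_ne ⟨j, hj⟩ c (by simpa using h) fun k hk => ?_
  simp [Fin.ext_iff.not.mp hk]

theorem PZ_mul_gammaA {L j : ℕ} (hj : j < L) (m : ℕ) :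
    PZ L j * gammaA L m = (if j < m then -1 else 1 : ℂ) • (gammaA L m * PZ L j) := by
  rw [gammaA_eq_tensorOp, PZ]
  refine siteOp_mul_tensorOp hj ?_
  rcases lt_trichotomy j m with hjm | rfl | hjm
  · simp [jwProfile, hjm, sigmaX_mul_sigmaZ, sigmaZ_mul_sigmaX]
  · simp [jwProfile]
  · simp [jwProfile, hjm.not_gt, hjm.ne']

theorem PX_mul_gammaA {L j : ℕ} (hj : j < L) (m : ℕ) :
    PX L j * gammaA L m = (if j = m then -1 else 1 : ℂ) • (gammaA L m * PX L j) := by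
  rw [gammaA_eq_tensorOp, PX]
  refine siteOp_mul_tensorOp hj ?_
  rcases lt_trichotomy j m with hjm | rfl | hjm
  · simp [jwProfile, hjm, hjm.ne]
  · simp [jwProfile, sigmaX_mul_sigmaZ, sigmaZ_mul_sigmaX]
  · simp [jwProfile, hjm.not_gt, hjm.ne']

theorem gammaA_mul_self (L m : ℕ) : gammaA L m * gammaA L m = 1 := by
  rw [gammaA_eq_tensorOp, tensorOp_mul, ← tensorOp_one]
  congr 1
  ext1 k
  unfold jwProfile
  split_ifs <;> simp [sigmaX_mul_self, sigmaZ_mul_self]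

theorem gammaA_mul_gammaA_of_lt {L m n : ℕ} (hm : m < L) (hmn : m < n) :
    gammaA L m * gammaA L n = -(gammaA L n * gammaA L m) := by
  rw [← neg_one_smul ℂ, gammaA_eq_tensorOp, gammaA_eq_tensorOp]
  refine tensorOp_mul_eq_smul_mul_of_forall_ne ⟨m, hm⟩ _ ?_ fun k hk => ?_
  · simp [jwProfile, hmn, sigmaX_mul_sigmaZ, sigmaZ_mul_sigmaX]
  · have hk' : (k : ℕ) ≠ m := Fin.val_ne_of_ne hk
    rcases lt_or_gt_of_ne hk' with hkm | hkm
    · simp [jwProfile, hkm, hkm.trans hmn]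
    · simp [jwProfile, hkm.not_gt, hk']

theorem PZ_mul_PZ_mul_gammaA_succ {L j : ℕ} (hj : j + 1 < L) :
    PZ L j * PZ L (j + 1) * gammaA L (j + 1) = I • gammaB L j := by
  rw [PZ, PZ, siteOp_eq_tensorOp, siteOp_eq_tensorOp, gammaA_eq_tensorOp, gammaB_eq_tensorOp,
    tensorOp_mul, tensorOp_mul]
  refine tensorOp_eq_smul_of_forall_ne ⟨j, by omega⟩ _ ?_ fun k hk => ?_
  · simp [jwProfile, sigmaZ_mul_sigmaX]
  · have hk' : (k : ℕ) ≠ j := Fin.val_ne_of_ne hk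
    rcases lt_trichotomy (k : ℕ) (j + 1) with hkj | hkj | hkj
    · have hkj' : (k : ℕ) < j := by omega
      simp [jwProfile, hk', hkj.ne, hkj', hkj'.not_gt]
    · simp [jwProfile, hkj, sigmaZ_mul_self]
    · simp [jwProfile, hk', hkj.ne', hkj.not_gt, show ¬ (k : ℕ) < j by omega]

theorem PX_mul_gammaA_self {L j : ℕ} (hj : j < L) :
    PX L j * gammaA L j = -I • gammaB L j := by
  rw [PX, siteOp_eq_tensorOp, gammaA_eq_tensorOp, gammaB_eq_tensorOp, tensorOp_mul]
  refine tensorOp_eq_smul_of_forall_ne ⟨j, hj⟩ _ ?_ fun k hk => ?_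
  · simp [jwProfile, sigmaX_mul_sigmaZ]
  · have hk' : (k : ℕ) ≠ j := Fin.val_ne_of_ne hk
    simp [jwProfile, hk']

attribute [local instance] LieRing.ofAssociativeRing

theorem lie_PZ_mul_PZ_gammaA {L j : ℕ} (hj : j + 1 < L) (m : ℕ) :
    ⁅PZ L j * PZ L (j + 1), gammaA L m⁆ = if m = j + 1 then (2 * I) • gammaB L j else 0 := by
  have hcomm : PZ L j * PZ L (j + 1) * gammaA L m
      = ((if j < m then -1 else 1) * (if j + 1 < m then -1 else 1) : ℂ)
        • (gammaA L m * (PZ L j * PZ L (j + 1))) := by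
    rw [mul_assoc, PZ_mul_gammaA hj, mul_smul_comm, ← mul_assoc, PZ_mul_gammaA (by omega),
      smul_mul_assoc, smul_smul, mul_assoc, mul_comm]
  rw [Ring.lie_def]
  obtain rfl | hm := eq_or_ne m (j + 1)
  · have hanti : gammaA L (j + 1) * (PZ L j * PZ L (j + 1))
        = -(PZ L j * PZ L (j + 1) * gammaA L (j + 1)) := by
      rw [hcomm]; norm_num
    rw [if_pos rfl, hanti, sub_neg_eq_add, PZ_mul_PZ_mul_gammaA_succ hj, ← two_smul ℂ,
      smul_smul]
  · have hsign : ((if j < m then -1 else 1) * (if j + 1 < m then -1 else 1) : ℂ) = 1 := by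
      split_ifs <;> norm_num <;> omega
    rw [if_neg hm, hcomm, hsign, one_smul, sub_self]

theorem lie_PX_gammaA {L j : ℕ} (hj : j < L) (m : ℕ) :
    ⁅PX L j, gammaA L m⁆ = if m = j then (-(2 * I)) • gammaB L j else 0 := by
  rw [Ring.lie_def]
  obtain rfl | hm := eq_or_ne m j
  · have hanti : gammaA L m * PX L m = -(PX L m * gammaA L m) := by
      rw [PX_mul_gammaA hj, if_pos rfl, neg_one_smul, neg_neg]
    rw [if_pos rfl, hanti, sub_neg_eq_add, PX_mul_gammaA_self hj, ← two_smul ℂ, smul_smul,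
      mul_neg]
  · rw [if_neg hm, PX_mul_gammaA hj, if_neg hm.symm, one_smul, sub_self]

theorem lie_sum_PZ_mul_PZ_sum_gammaA (L : ℕ) (q : ℂ) :
    ⁅∑ j ∈ Finset.range (L - 1), PZ L j * PZ L (j + 1),
        ∑ m ∈ Finset.range L, q ^ m • gammaA L m⁆
      = ∑ j ∈ Finset.range (L - 1), (2 * I * q ^ (j + 1)) • gammaB L j := by
  rw [sum_lie]
  refine Finset.sum_congr rfl fun j hj => ?_
  have hj' : j + 1 < L := by have := Finset.mem_range.mp hj; omega
  simp only [lie_sum, lie_smul, lie_PZ_mul_PZ_gammaA hj', smul_ite, smul_zero]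
  rw [Finset.sum_ite_eq', if_pos (Finset.mem_range.mpr hj'), smul_smul, mul_comm]

theorem lie_sum_PX_sum_gammaA (L : ℕ) (q : ℂ) :
    ⁅∑ j ∈ Finset.range L, PX L j, ∑ m ∈ Finset.range L, q ^ m • gammaA L m⁆
      = ∑ j ∈ Finset.range L, (-(2 * I * q ^ j)) • gammaB L j := by
  rw [sum_lie]
  refine Finset.sum_congr rfl fun j hj => ?_
  simp only [lie_sum, lie_smul, lie_PX_gammaA (Finset.mem_range.mp hj), smul_ite, smul_zero]
  rw [Finset.sum_ite_eq', if_pos hj, smul_smul, mul_comm, neg_mul]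

theorem statement_5 (L : ℕ) (hL : 2 ≤ L) (J h : ℝ) (hJ : J ≠ 0)
    (H Φ : Matrix (Fin L → Fin 2) (Fin L → Fin 2) ℂ)
    (hH : H = -(J : ℂ) • (∑ j ∈ Finset.range (L - 1), PZ L j * PZ L (j + 1))
            - (h : ℂ) • (∑ j ∈ Finset.range L, PX L j))
    (hΦ : Φ = ∑ j ∈ Finset.range L, ((h : ℂ) / (J : ℂ)) ^ j • gammaA L j) :
    H * Φ - Φ * H
      = (2 * Complex.I * (h : ℂ) * ((h : ℂ) / (J : ℂ)) ^ (L - 1)) • gammaB L (L - 1) ∧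
    Φ * Φ = (∑ j ∈ Finset.range L, ((h : ℂ) / (J : ℂ)) ^ (2 * j))
              • (1 : Matrix (Fin L → Fin 2) (Fin L → Fin 2) ℂ) := by
  set q : ℂ := (h : ℂ) / (J : ℂ)
  have hJq : (J : ℂ) * q = h := mul_div_cancel₀ _ (Complex.ofReal_ne_zero.mpr hJ)
  constructor
  · obtain ⟨M, rfl⟩ : ∃ M, L = M + 1 := ⟨L - 1, by omega⟩
    have hbulk : ∀ j, -(J : ℂ) • ((2 * I * q ^ (j + 1)) • gammaB (M + 1) j)
        - (h : ℂ) • (-(2 * I * q ^ j)) • gammaB (M + 1) j = 0 := fun j => by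
      rw [smul_smul, smul_smul, ← sub_smul]
      exact smul_eq_zero_of_left (by linear_combination (-(2 * I * q ^ j)) * hJq) _
    rw [← Ring.lie_def, hH, hΦ, sub_lie, smul_lie, smul_lie, lie_sum_PZ_mul_PZ_sum_gammaA,
      lie_sum_PX_sum_gammaA, Nat.add_sub_cancel, Finset.sum_range_succ, smul_add,
      Finset.smul_sum, Finset.smul_sum, sub_add_eq_sub_sub, ← Finset.sum_sub_distrib,
      Finset.sum_eq_zero fun j _ => hbulk j, zero_sub, smul_smul, ← neg_smul]
    congr 1
    ring
  · rw [hΦ, sum_smul_mul_self_of_anticommute _ _ _ (fun m _ => gammaA_mul_self L m)]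
    · simp only [← pow_mul, mul_comm]
    · intro m hm n hn hmn
      rcases hmn.lt_or_gt with hlt | hgt
      · exact gammaA_mul_gammaA_of_lt (Finset.mem_range.mp hm) hlt
      · rw [gammaA_mul_gammaA_of_lt (Finset.mem_range.mp hn) hgt, neg_neg]

end
end

section
/- Let R be an associative unital ℂ-algebra containing elements a_j, b_j for j ∈ ℤ/L (L ≥ 1) satisfying the Majorana relations a_j a_k + a_k a_j = 2δ_{jk}·1, b_j b_k + b_k b_j = 2δ_{jk}·1, and a_j b_k + b_k a_j = 0 for all j, k ∈ ℤ/L. Define G_n = (1/4) Σ_{j∈ℤ/L} (a_j a_{j+n} − b_j b_{j+n}) and A_m = −i Σ_{j∈ℤ/L} b_j a_{j+1−m}. Then for all n, m ∈ ℤ/L the Onsager algebra relations hold: [G_n, G_m] = 0, [G_n, A_m] = A_{m+n} − A_{m−n}, and [A_n, A_m] = 8 G_{n−m}. -/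
/-!
For a Majorana family γ (γ_x γ_y + γ_y γ_x = 2δ_xy) the bilinears Q(M) = Σ M_xy γ_x γ_y close
under commutators: [Q(M), γ_r] = 2 Σ_p (M - Mᵀ)_pr γ_p, hence [Q(M), Q(N)] = 2 Q([M - Mᵀ, N]).
Viewing a and b as one Majorana family indexed by ℤ/L ⊕ ℤ/L, G_n and A_m are Q of block matrices
whose blocks are cyclic shift matrices. Shifts commute and multiply by adding offsets, so each
Onsager relation becomes a two-line block-matrix identity.
-/

open Finset Matrix

section Majorana

variable {ι S R : Type*} [CommRing S] [Ring R] [Algebra S R]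

def IsMajoranaFamily [DecidableEq ι] (γ : ι → R) : Prop :=
  ∀ x y, γ x * γ y + γ y * γ x = if x = y then 2 else 0

theorem IsMajoranaFamily.sumElim {κ : Type*} [DecidableEq ι] [DecidableEq κ] {a : ι → R}
    {b : κ → R} (ha : IsMajoranaFamily a) (hb : IsMajoranaFamily b)
    (hab : ∀ j k, a j * b k + b k * a j = 0) : IsMajoranaFamily (Sum.elim a b) := by
  rintro (j | j) (k | k)
  · simpa using ha j k
  · simpa using hab j k
  · simpa [add_comm] using hab k j
  · simpa using hb j k

variable [Fintype ι]

variable (S) in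
def majoranaBilinear (γ : ι → R) : Matrix ι ι S →ₗ[S] R where
  toFun M := ∑ x, ∑ y, M x y • (γ x * γ y)
  map_add' M N := by simp only [Matrix.add_apply, add_smul, sum_add_distrib]
  map_smul' c M := by
    simp only [Matrix.smul_apply, smul_eq_mul, mul_smul, smul_sum, RingHom.id_apply]

theorem majoranaBilinear_apply (γ : ι → R) (M : Matrix ι ι S) :
    majoranaBilinear S γ M = ∑ x, ∑ y, M x y • (γ x * γ y) := rfl

theorem majoranaBilinear_mul_add_mul_transpose (γ : ι → R) (K N : Matrix ι ι S) :
    majoranaBilinear S γ (K * N) + majoranaBilinear S γ (N * Kᵀ) =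
      ∑ r, ∑ s, N r s • ((∑ p, K p r • γ p) * γ s + γ r * ∑ p, K p s • γ p) := by
  simp only [majoranaBilinear_apply, Matrix.mul_apply, transpose_apply, sum_smul, smul_add,
    sum_add_distrib, sum_mul, mul_sum, smul_sum, smul_mul_assoc, mul_smul_comm, smul_smul]
  congr 1
  · rw [sum_comm]
    conv_rhs => rw [sum_comm]
    exact sum_congr rfl fun _ _ => by rw [sum_comm]; simp only [mul_comm]
  · exact sum_congr rfl fun _ _ => sum_comm

variable [DecidableEq ι] {γ : ι → R}

theorem IsMajoranaFamily.lie_majoranaBilinear_generator (hγ : IsMajoranaFamily γ)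
    (M : Matrix ι ι S) (r : ι) :
    ⁅majoranaBilinear S γ M, γ r⁆ = (2 : S) • ∑ p, (M - Mᵀ) p r • γ p := by
  have anticomm : ∀ p q, γ p * γ q * γ r - γ r * (γ p * γ q) =
      γ p * (γ q * γ r + γ r * γ q) - (γ p * γ r + γ r * γ p) * γ q := fun p q => by
    noncomm_ring
  simp only [majoranaBilinear_apply, Ring.lie_def, sum_mul, mul_sum, smul_mul_assoc,
    mul_smul_comm, ← sum_sub_distrib, ← smul_sub, anticomm, hγ _ _]
  simp [mul_ite, ite_mul, smul_sub, sum_sub_distrib, sub_smul, smul_sum, smul_smul, mul_comm,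
    mul_two, two_mul, smul_add, add_smul]

theorem IsMajoranaFamily.lie_majoranaBilinear (hγ : IsMajoranaFamily γ) (M N : Matrix ι ι S) :
    ⁅majoranaBilinear S γ M, majoranaBilinear S γ N⁆ =
      (2 : S) • majoranaBilinear S γ ⁅M - Mᵀ, N⁆ := by
  have leibniz : ⁅majoranaBilinear S γ M, majoranaBilinear S γ N⁆ = ∑ r, ∑ s, N r s •
      (⁅majoranaBilinear S γ M, γ r⁆ * γ s + γ r * ⁅majoranaBilinear S γ M, γ s⁆) := by
    rw [Ring.lie_def, majoranaBilinear_apply γ N]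
    simp only [mul_sum, sum_mul, ← sum_sub_distrib, mul_smul_comm, smul_mul_assoc, ← smul_sub]
    refine sum_congr rfl fun r _ => sum_congr rfl fun s _ => ?_
    simp only [Ring.lie_def]
    noncomm_ring
  have antisymm : (M - Mᵀ)ᵀ = -(M - Mᵀ) := by rw [transpose_sub, transpose_transpose, neg_sub]
  simp only [leibniz, hγ.lie_majoranaBilinear_generator, smul_mul_assoc, mul_smul_comm, ← smul_add,
    smul_comm (N _ _) (2 : S), ← smul_sum]
  rw [← majoranaBilinear_mul_add_mul_transpose, antisymm, mul_neg, map_neg, ← sub_eq_add_neg,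
    ← map_sub, Ring.lie_def]

end Majorana

section Shift

variable {Γ S : Type*} [AddCommGroup Γ] [DecidableEq Γ] [CommRing S]

variable (S) in
def shiftMatrix (n : Γ) : Matrix Γ Γ S := (Equiv.addRight n).permMatrix S

theorem shiftMatrix_apply (n j k : Γ) : shiftMatrix S n j k = if j + n = k then 1 else 0 := by
  simp [shiftMatrix, PEquiv.toMatrix_apply]

theorem transpose_shiftMatrix (n : Γ) : (shiftMatrix S n)ᵀ = shiftMatrix S (-n) := by
  rw [shiftMatrix, transpose_permMatrix, Equiv.neg_addRight, shiftMatrix]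

variable [Fintype Γ]

theorem shiftMatrix_mul_shiftMatrix (n m : Γ) :
    shiftMatrix S n * shiftMatrix S m = shiftMatrix S (n + m) := by
  rw [shiftMatrix, shiftMatrix, ← permMatrix_mul, ← Equiv.addRight_add, shiftMatrix]

theorem sum_shiftMatrix_smul {M : Type*} [AddCommMonoid M] [Module S M] (n : Γ)
    (f : Γ → Γ → M) : ∑ j, ∑ k, shiftMatrix S n j k • f j k = ∑ j, f j (j + n) := by
  simp [shiftMatrix_apply, ite_smul]

variable (S) in
def diagShift (n : Γ) : Matrix (Γ ⊕ Γ) (Γ ⊕ Γ) S :=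
  fromBlocks (shiftMatrix S n) 0 0 (-shiftMatrix S n)

variable (S) in
def lowerShift (k : Γ) : Matrix (Γ ⊕ Γ) (Γ ⊕ Γ) S :=
  fromBlocks 0 0 (shiftMatrix S k) 0

theorem lie_diagShift_sub_transpose_diagShift (n m : Γ) :
    ⁅diagShift S n - (diagShift S n)ᵀ, diagShift S m⁆ = 0 := by
  simp [diagShift, Ring.lie_def, fromBlocks_transpose, transpose_shiftMatrix, fromBlocks_multiply,
    shiftMatrix_mul_shiftMatrix, sub_eq_add_neg, fromBlocks_neg, fromBlocks_add, add_mul, mul_add,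
    add_comm]

theorem lie_diagShift_sub_transpose_lowerShift (n k : Γ) :
    ⁅diagShift S n - (diagShift S n)ᵀ, lowerShift S k⁆ =
      (2 : S) • (lowerShift S (k - n) - lowerShift S (k + n)) := by
  simp [diagShift, lowerShift, Ring.lie_def, fromBlocks_transpose, transpose_shiftMatrix,
    fromBlocks_multiply, shiftMatrix_mul_shiftMatrix, sub_eq_add_neg, fromBlocks_neg,
    fromBlocks_add, add_mul, mul_add, add_comm, two_smul]

theorem lie_lowerShift_sub_transpose_lowerShift (k l : Γ) :
    ⁅lowerShift S k - (lowerShift S k)ᵀ, lowerShift S l⁆ = -diagShift S (l - k) := by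
  simp [diagShift, lowerShift, Ring.lie_def, fromBlocks_transpose, transpose_shiftMatrix,
    fromBlocks_multiply, shiftMatrix_mul_shiftMatrix, sub_eq_add_neg, fromBlocks_neg,
    fromBlocks_add, add_comm]

variable {R : Type*} [Ring R] [Algebra S R]

theorem majoranaBilinear_diagShift (a b : Γ → R) (n : Γ) :
    majoranaBilinear S (Sum.elim a b) (diagShift S n) =
      ∑ j, (a j * a (j + n) - b j * b (j + n)) := by
  simp [majoranaBilinear_apply, diagShift, Fintype.sum_sum_type, sum_shiftMatrix_smul,
    neg_smul, sub_eq_add_neg, sum_add_distrib]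

theorem majoranaBilinear_lowerShift (a b : Γ → R) (k : Γ) :
    majoranaBilinear S (Sum.elim a b) (lowerShift S k) = ∑ j, b j * a (j + k) := by
  simp [majoranaBilinear_apply, lowerShift, Fintype.sum_sum_type, sum_shiftMatrix_smul]

end Shift

theorem statement_11_general (L : ℕ) [NeZero L]
    (R : Type*) [Ring R] [Algebra ℂ R]
    (a b : ZMod L → R)
    (ha : ∀ j k : ZMod L, a j * a k + a k * a j = if j = k then 2 else 0)
    (hb : ∀ j k : ZMod L, b j * b k + b k * b j = if j = k then 2 else 0)
    (hab : ∀ j k : ZMod L, a j * b k + b k * a j = 0)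
    (G A : ZMod L → R)
    (hG : ∀ n : ZMod L, G n = (4 : ℂ)⁻¹ • ∑ j : ZMod L, (a j * a (j + n) - b j * b (j + n)))
    (hA : ∀ m : ZMod L, A m = (-Complex.I) • ∑ j : ZMod L, b j * a (j + 1 - m)) :
    ∀ n m : ZMod L,
      (G n * G m - G m * G n = 0) ∧
      (G n * A m - A m * G n = A (m + n) - A (m - n)) ∧
      (A n * A m - A m * A n = (8 : ℂ) • G (n - m)) := by
  have hγ : IsMajoranaFamily (Sum.elim a b) := IsMajoranaFamily.sumElim ha hb hab
  have hG' (n : ZMod L) : G n = (4 : ℂ)⁻¹ • majoranaBilinear ℂ (Sum.elim a b) (diagShift ℂ n) := by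
    rw [hG, majoranaBilinear_diagShift]
  have hA' (m : ZMod L) :
      A m = (-Complex.I) • majoranaBilinear ℂ (Sum.elim a b) (lowerShift ℂ (1 - m)) := by
    simp only [hA, majoranaBilinear_lowerShift, add_sub_assoc]
  intro n m
  simp only [hG', hA', smul_mul_smul_comm, mul_comm (-Complex.I) 4⁻¹, ← smul_sub, ← Ring.lie_def,
    hγ.lie_majoranaBilinear]
  refine ⟨?_, ?_, ?_⟩
  · rw [lie_diagShift_sub_transpose_diagShift]
    simp
  · rw [lie_diagShift_sub_transpose_lowerShift, sub_sub, sub_add]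
    simp only [map_smul, map_sub]
    module
  · rw [lie_lowerShift_sub_transpose_lowerShift, sub_sub_sub_cancel_left]
    simp only [map_neg, smul_neg, smul_smul]
    norm_num

theorem statement_11 (L : ℕ) [NeZero L] (hL : 1 ≤ L)
    (R : Type*) [Ring R] [Algebra ℂ R]
    (a b : ZMod L → R)
    (ha : ∀ j k : ZMod L, a j * a k + a k * a j = if j = k then 2 else 0)
    (hb : ∀ j k : ZMod L, b j * b k + b k * b j = if j = k then 2 else 0)
    (hab : ∀ j k : ZMod L, a j * b k + b k * a j = 0)
    (G A : ZMod L → R)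
    (hG : ∀ n : ZMod L, G n = (4 : ℂ)⁻¹ • ∑ j : ZMod L, (a j * a (j + n) - b j * b (j + n)))
    (hA : ∀ m : ZMod L, A m = (-Complex.I) • ∑ j : ZMod L, b j * a (j + 1 - m)) :
    ∀ n m : ZMod L,
      (G n * G m - G m * G n = 0) ∧
      (G n * A m - A m * G n = A (m + n) - A (m - n)) ∧
      (A n * A m - A m * A n = (8 : ℂ) • G (n - m)) :=
  statement_11_general L R a b ha hb hab G A hG hA
end
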